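/- arXiv:2204.06443 — 3 statements merged into one kernel-verified Lean document; each statement's English description precedes it below -/
import Mathlib

section
/- Fix k > 0 with k ≠ 1 and C > 0. Define on the set I_C = {s > 0 : 2Cs^{k+1}/(s²+1) > 1} the functions t(s) = √(2Cs^{k+1}/(s²+1) − 1) and g(s) = ((k−1)s² − (k+1))/(4ks) · √(2Cs^{k+1}/(s²+1)). Then the pair (t(s), g(s)) satisfies (1 + t²) + ((t + 1/t)·(dg/dt) + g)² = k²·((t + 1/t)·(dg/dt) − g)² wherever t(s) ≠ 0 and ds/dt exists, where dg/dt = g'(s)/t'(s). -/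
open Real

/-!
With `t = √(h - 1)` one has `t + 1/t = h/t` and `t' = h'/(2t)`, so `(t + 1/t) · dg/dt = 2 h g'/h'`,
which for `g = q √h` is `√h (2 h q'/h' + q)`. For the given `h` and `q`, both `h'/h` and `q'` carry
the factor `(k-1)s² + (k+1)`, which cancels: `2 h q'/h' = (s² + 1)/(2ks)`. Hence
`(t + 1/t) dg/dt + g = √h (s² - 1)/(2s)` and `(t + 1/t) dg/dt - g = √h (s² + 1)/(2ks)`, and the
equation reduces to `4s² + (s² - 1)² = (s² + 1)²`.
-/

theorem hasDerivAt_mul_rpow_div_sq_add_one (A p : ℝ) {s : ℝ} (hs : s ≠ 0) :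
    HasDerivAt (fun u => A * u ^ p / (u ^ 2 + 1))
      (A * s ^ p / (s ^ 2 + 1) * (((p - 2) * s ^ 2 + p) / (s * (s ^ 2 + 1)))) s := by
  have hnum := (hasDerivAt_rpow_const (p := p) (Or.inl hs)).const_mul A
  have hden : HasDerivAt (fun u : ℝ => u ^ 2 + 1) (2 * s) s := by
    simpa using (hasDerivAt_pow 2 s).add_const 1
  refine (hnum.div hden (by positivity)).congr_deriv ?_
  rw [rpow_sub_one hs]
  field_simp
  ring

theorem hasDerivAt_sq_sub_div_mul (a b c : ℝ) {s : ℝ} (hc : c ≠ 0) (hs : s ≠ 0) :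
    HasDerivAt (fun u => (a * u ^ 2 - b) / (c * u)) ((a * s ^ 2 + b) / (c * s ^ 2)) s := by
  have hnum : HasDerivAt (fun u : ℝ => a * u ^ 2 - b) (a * (2 * s)) s := by
    simpa using ((hasDerivAt_pow 2 s).const_mul a).sub_const b
  have hden : HasDerivAt (fun u : ℝ => c * u) c s := by
    simpa using (hasDerivAt_id s).const_mul c
  refine (hnum.div hden (mul_ne_zero hc hs)).congr_deriv ?_
  field_simp
  ring

theorem sqrt_sub_one_add_inv_mul_slope {h q : ℝ → ℝ} {s h' q' : ℝ}
    (hh : HasDerivAt h h' s) (hq : HasDerivAt q q' s) (h1 : 1 < h s) (hh' : h' ≠ 0) :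
    (√(h s - 1) + 1 / √(h s - 1)) *
        (deriv (fun u => q u * √(h u)) s / deriv (fun u => √(h u - 1)) s)
      = √(h s) * (2 * h s * q' / h' + q s) := by
  have hx : √(h s) ^ 2 = h s := sq_sqrt (by linarith)
  have hy : √(h s - 1) ^ 2 = h s - 1 := sq_sqrt (by linarith)
  have hx0 : √(h s) ≠ 0 := (sqrt_pos.2 (by linarith)).ne'
  have hy0 : √(h s - 1) ≠ 0 := (sqrt_pos.2 (by linarith)).ne'
  have hg : HasDerivAt (fun u => q u * √(h u)) _ s := hq.mul (hh.sqrt (by linarith))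
  have ht : HasDerivAt (fun u => √(h u - 1)) _ s := (hh.sub_const 1).sqrt (by linarith)
  rw [hg.deriv, ht.deriv]
  field_simp
  rw [hx, hy]
  ring

theorem crpc_identity (k s x : ℝ) (hk : k ≠ 0) (hs : s ≠ 0) :
    x ^ 2 + (x * ((s ^ 2 + 1) / (2 * k * s) + ((k - 1) * s ^ 2 - (k + 1)) / (4 * k * s))
        + ((k - 1) * s ^ 2 - (k + 1)) / (4 * k * s) * x) ^ 2
      = k ^ 2 * (x * ((s ^ 2 + 1) / (2 * k * s) + ((k - 1) * s ^ 2 - (k + 1)) / (4 * k * s))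
        - ((k - 1) * s ^ 2 - (k + 1)) / (4 * k * s) * x) ^ 2 := by
  field_simp
  ring

theorem parametric_solution_satisfies_CRPC_ODE_general (k C : ℝ) (hk : 0 < k)
    (h t g : ℝ → ℝ)
    (hh : h = fun s => 2 * C * s ^ (k + 1) / (s ^ 2 + 1))
    (ht : t = fun s => Real.sqrt (h s - 1))
    (hg : g = fun s => ((k - 1) * s ^ 2 - (k + 1)) / (4 * k * s) * Real.sqrt (h s)) :
    ∀ s : ℝ, 0 < s → 1 < h s → t s ≠ 0 → deriv t s ≠ 0 →
      (1 + (t s) ^ 2) + ((t s + 1 / t s) * (deriv g s / deriv t s) + g s) ^ 2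
        = k ^ 2 * ((t s + 1 / t s) * (deriv g s / deriv t s) - g s) ^ 2 := by
  intro s hs h1 _ hdt
  subst ht hg
  beta_reduce
  have hh' : HasDerivAt h (h s * (((k + 1 - 2) * s ^ 2 + (k + 1)) / (s * (s ^ 2 + 1)))) s := by
    subst hh
    exact hasDerivAt_mul_rpow_div_sq_add_one (2 * C) (k + 1) hs.ne'
  have hq := hasDerivAt_sq_sub_div_mul (k - 1) (k + 1) (4 * k) (by positivity) hs.ne'
  have hh'0 : h s * (((k + 1 - 2) * s ^ 2 + (k + 1)) / (s * (s ^ 2 + 1))) ≠ 0 := by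
    intro h0
    exact hdt (by rw [((hh'.sub_const 1).sqrt (by linarith)).deriv, h0, zero_div])
  have hratio : 2 * h s * (((k - 1) * s ^ 2 + (k + 1)) / (4 * k * s ^ 2)) /
      (h s * (((k + 1 - 2) * s ^ 2 + (k + 1)) / (s * (s ^ 2 + 1))))
      = (s ^ 2 + 1) / (2 * k * s) := by
    have hD : (k + 1 - 2) * s ^ 2 + (k + 1) ≠ 0 :=
      (div_ne_zero_iff.1 (right_ne_zero_of_mul hh'0)).1
    have hh0 : h s ≠ 0 := (show 0 < h s by linarith).ne'
    rw [show k - 1 = k + 1 - 2 by ring]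
    field_simp
    ring
  have hcrpc := crpc_identity k s √(h s) hk.ne' hs.ne'
  rw [sq_sqrt (by linarith)] at hcrpc
  rwa [sqrt_sub_one_add_inv_mul_slope hh' hq h1 hh'0, hratio, sq_sqrt (by linarith),
    add_sub_cancel]

theorem parametric_solution_satisfies_CRPC_ODE (k C : ℝ) (hk : 0 < k) (hk1 : k ≠ 1)
    (hC : 0 < C)
    (h t g : ℝ → ℝ)
    (hh : h = fun s => 2 * C * s ^ (k + 1) / (s ^ 2 + 1))
    (ht : t = fun s => Real.sqrt (h s - 1))
    (hg : g = fun s => ((k - 1) * s ^ 2 - (k + 1)) / (4 * k * s) * Real.sqrt (h s)) :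
    ∀ s : ℝ, 0 < s → 1 < h s → t s ≠ 0 → deriv t s ≠ 0 →
      (1 + (t s) ^ 2) + ((t s + 1 / t s) * (deriv g s / deriv t s) + g s) ^ 2
        = k ^ 2 * ((t s + 1 / t s) * (deriv g s / deriv t s) - g s) ^ 2 :=
  parametric_solution_satisfies_CRPC_ODE_general k C hk h t g hh ht hg
end

section
/- Let h be smooth at s₀ with h'(s₀) > 0 and t(s) = √(h(s) − 1) with h(s₀) = 1 (so t(s₀)=0). If p(s) = Σᵢ aᵢ(s)t(s)^i is a polynomial in t(s) with coefficients smooth at s₀ in which only even-degree (resp. odd-degree) terms appear, then p'(s)/t'(s) is again such a polynomial in t(s) with coefficients smooth at s₀, in which only odd-degree (resp. even-degree) terms appear. -/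
open Finset Filter Topology

lemma contDiffAt_deriv' {f : ℝ → ℝ} {x : ℝ} (hf : ContDiffAt ℝ (⊤ : ℕ∞) f x) :
    ContDiffAt ℝ (⊤ : ℕ∞) (deriv f) x := by
  have h1 : ContDiffAt ℝ (⊤ : ℕ∞) (fderiv ℝ f) x := hf.fderiv_right (by simp)
  have h2 : ContDiffAt ℝ (⊤ : ℕ∞) (fun y => fderiv ℝ f y 1) x := h1.clm_apply contDiffAt_const
  simpa only [fderiv_apply_one_eq_deriv] using h2

theorem parity_lemma_conjugate (s₀ : ℝ) (h : ℝ → ℝ)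
    (hsm : ContDiffAt ℝ (⊤ : ℕ∞) h s₀) (hval : h s₀ = 1) (hder : 0 < deriv h s₀)
    (t : ℝ → ℝ) (ht : t = fun s => Real.sqrt (h s - 1))
    (r : ℕ) (hr : r < 2)
    (n : ℕ) (a : ℕ → ℝ → ℝ) (ha : ∀ i, ContDiffAt ℝ (⊤ : ℕ∞) (a i) s₀)
    (hpar : ∀ i, i % 2 ≠ r → a i = 0)
    (p : ℝ → ℝ) (hp : p = fun s => ∑ i ∈ range (n + 1), a i s * (t s) ^ i) :
    ∃ (m : ℕ) (b : ℕ → ℝ → ℝ),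
      (∀ i, ContDiffAt ℝ (⊤ : ℕ∞) (b i) s₀) ∧
      (∀ i, i % 2 ≠ 1 - r → b i = 0) ∧
      (∀ᶠ s in 𝓝[>] s₀, deriv p s / deriv t s = ∑ i ∈ range (m + 1), b i s * (t s) ^ i) := by
  subst ht hp
  refine ⟨n + 1, fun i s =>
      (if 1 ≤ i ∧ i ≤ n + 1 then 2 * deriv (a (i - 1)) s / deriv h s else 0) +
      (if i + 1 ≤ n then ((i : ℝ) + 1) * a (i + 1) s else 0), ?_, ?_, ?_⟩
  · -- smoothness
    intro i
    by_cases hc1 : 1 ≤ i ∧ i ≤ n + 1 <;> by_cases hc2 : i + 1 ≤ n <;>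
      simp only [hc1, hc2, if_true, if_false, add_zero, zero_add] <;>
    · first
      | exact ((contDiffAt_const.mul (contDiffAt_deriv' (ha _))).div
            (contDiffAt_deriv' hsm) (ne_of_gt hder)).add (contDiffAt_const.mul (ha _))
      | exact (contDiffAt_const.mul (contDiffAt_deriv' (ha _))).div
            (contDiffAt_deriv' hsm) (ne_of_gt hder)
      | exact contDiffAt_const.mul (ha _)
      | exact contDiffAt_const
  · -- parity
    intro i hi
    have hir : i % 2 = r := by omega
    funext s
    by_cases hc1 : 1 ≤ i ∧ i ≤ n + 1 <;> by_cases hc2 : i + 1 ≤ n <;>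
      simp only [hc1, hc2, if_true, if_false, add_zero, zero_add]
    · rw [hpar (i - 1) (by omega), hpar (i + 1) (by omega)]; simp [Pi.zero_def]
    · rw [hpar (i - 1) (by omega)]; simp [Pi.zero_def]
    · rw [hpar (i + 1) (by omega)]; simp
    · simp
  · -- the eventual identity
    have hcd : ContinuousAt (deriv h) s₀ := (contDiffAt_deriv' hsm).continuousAt
    have h1 : ∀ᶠ s in 𝓝 s₀, 0 < deriv h s := hcd.eventually (eventually_gt_nhds hder)
    have h2 : ∀ᶠ s in 𝓝 s₀, DifferentiableAt ℝ h s :=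
      ((hsm.of_le (by simp)).eventually (by simp)).mono fun x hx =>
        (hx : ContDiffAt ℝ 1 h x).differentiableAt one_ne_zero
    have h3 : ∀ᶠ s in 𝓝 s₀, ∀ i ∈ range (n + 1), DifferentiableAt ℝ (a i) s := by
      rw [eventually_all_finset]
      intro i _
      exact (((ha i).of_le (by simp)).eventually (by simp)).mono fun x hx =>
        (hx : ContDiffAt ℝ 1 (a i) x).differentiableAt one_ne_zero
    -- h s > 1 eventually on the right
    have h4 : ∀ᶠ s in 𝓝[>] s₀, 1 < h s := by
      have hd : HasDerivAt h (deriv h s₀) s₀ := (hsm.differentiableAt (by simp)).hasDerivAt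
      rw [hasDerivAt_iff_tendsto_slope] at hd
      have hslope : ∀ᶠ s in 𝓝[≠] s₀, 0 < slope h s₀ s :=
        hd.eventually (eventually_gt_nhds hder)
      have hsub : 𝓝[>] s₀ ≤ 𝓝[≠] s₀ :=
        nhdsWithin_mono s₀ fun s hs => ne_of_gt hs
      filter_upwards [hslope.filter_mono hsub, self_mem_nhdsWithin] with s hsl hs
      have hspos : 0 < s - s₀ := sub_pos.2 hs
      have : 0 < (h s - h s₀) / (s - s₀) := by simpa [slope_def_field, div_eq_iff hspos.ne'] using hsl
      have := mul_pos this hspos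
      rw [div_mul_cancel₀ _ hspos.ne'] at this
      linarith [hval ▸ this]
    filter_upwards [h1.filter_mono nhdsWithin_le_nhds, h2.filter_mono nhdsWithin_le_nhds,
      h3.filter_mono nhdsWithin_le_nhds, h4] with s hA hdh hda hlt
    set ts := Real.sqrt (h s - 1) with hts_def
    have hts : 0 < ts := Real.sqrt_pos.2 (by linarith)
    have hT : HasDerivAt (fun x => Real.sqrt (h x - 1)) (deriv h s / (2 * ts)) s :=
      (hdh.hasDerivAt.sub_const 1).sqrt (ne_of_gt (by linarith : (0:ℝ) < h s - 1))
    have hTne : deriv h s / (2 * ts) ≠ 0 := by positivity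
    have hP : HasDerivAt (fun x => ∑ i ∈ range (n + 1), a i x * Real.sqrt (h x - 1) ^ i)
        (∑ i ∈ range (n + 1), (deriv (a i) s * ts ^ i +
          a i s * ((i : ℝ) * ts ^ (i - 1) * (deriv h s / (2 * ts))))) s :=
      HasDerivAt.fun_sum fun i hi => ((hda i hi).hasDerivAt.mul (hT.pow i))

    rw [hP.deriv, hT.deriv, Finset.sum_div]
    have lhs_eq : ∀ i ∈ range (n + 1),
        (deriv (a i) s * ts ^ i + a i s * ((i : ℝ) * ts ^ (i - 1) * (deriv h s / (2 * ts)))) /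
          (deriv h s / (2 * ts)) =
        2 * deriv (a i) s / deriv h s * ts ^ (i + 1) + (i : ℝ) * a i s * ts ^ (i - 1) := by
      intro i _
      rw [div_eq_iff hTne, pow_succ]
      field_simp
    rw [Finset.sum_congr rfl lhs_eq, Finset.sum_add_distrib]
    have S1 : ∑ i ∈ range (n + 2),
        (if 1 ≤ i ∧ i ≤ n + 1 then 2 * deriv (a (i - 1)) s / deriv h s else 0) * ts ^ i
        = ∑ i ∈ range (n + 1), 2 * deriv (a i) s / deriv h s * ts ^ (i + 1) := by
      rw [Finset.sum_range_succ', if_neg (by omega : ¬(1 ≤ 0 ∧ 0 ≤ n + 1)), zero_mul, add_zero]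
      refine Finset.sum_congr rfl fun i hi => ?_
      have hi' : i < n + 1 := Finset.mem_range.1 hi
      rw [if_pos ⟨by omega, by omega⟩, Nat.add_sub_cancel]
    have S2 : ∑ i ∈ range (n + 2),
        (if i + 1 ≤ n then ((i : ℝ) + 1) * a (i + 1) s else 0) * ts ^ i
        = ∑ i ∈ range (n + 1), (i : ℝ) * a i s * ts ^ (i - 1) := by
      conv_lhs => rw [Finset.sum_range_succ, Finset.sum_range_succ]
      rw [if_neg (by omega : ¬(n + 1 + 1 ≤ n)), if_neg (by omega : ¬(n + 1 ≤ n)),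
        zero_mul, zero_mul, add_zero, add_zero]
      conv_rhs => rw [Finset.sum_range_succ']
      rw [show ((0 : ℕ) : ℝ) * a 0 s * ts ^ (0 - 1) = 0 by simp, add_zero]
      refine Finset.sum_congr rfl fun i hi => ?_
      have hi' : i < n := Finset.mem_range.1 hi
      rw [if_pos (by omega)]
      push_cast
      ring
    have rhs_split : ∑ i ∈ range (n + 1 + 1),
        ((if 1 ≤ i ∧ i ≤ n + 1 then 2 * deriv (a (i - 1)) s / deriv h s else 0) +
         (if i + 1 ≤ n then ((i : ℝ) + 1) * a (i + 1) s else 0)) * ts ^ i =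
        (∑ i ∈ range (n + 2), (if 1 ≤ i ∧ i ≤ n + 1 then 2 * deriv (a (i - 1)) s / deriv h s else 0) * ts ^ i) +
        (∑ i ∈ range (n + 2), (if i + 1 ≤ n then ((i : ℝ) + 1) * a (i + 1) s else 0) * ts ^ i) := by
      rw [← Finset.sum_add_distrib]
      exact Finset.sum_congr rfl fun i _ => by ring
    rw [rhs_split, S1, S2]
end

section
/- For k = 3, the top view (x, y) = (t/2, g) of the profile curve of the helical CRPC surface lies on the algebraic curve of degree 6: (C/3 − 1/16 − x²/4 − y²/4)(4x² + 1)² − (4C²/9)(4x² + 1) + 6Cy²(4x² + 3y² + 1) = 0. -/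
open Real

theorem top_view_algebraic_curve_k3 (C : ℝ) (hC : 0 < C)
    (h t g : ℝ → ℝ)
    (hh : h = fun s => 2 * C * s ^ 4 / (s ^ 2 + 1))
    (ht : t = fun s => Real.sqrt (h s - 1))
    (hg : g = fun s => (2 * s ^ 2 - 4) / (12 * s) * Real.sqrt (h s)) :
    ∀ s : ℝ, 0 < s → 1 < h s →
      (C / 3 - 1 / 16 - (t s / 2) ^ 2 / 4 - (g s) ^ 2 / 4) * (4 * (t s / 2) ^ 2 + 1) ^ 2
        - 4 * C ^ 2 / 9 * (4 * (t s / 2) ^ 2 + 1)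
        + 6 * C * (g s) ^ 2 * (4 * (t s / 2) ^ 2 + 3 * (g s) ^ 2 + 1) = 0 := by
  intro s hs hH
  have hH0 : (0:ℝ) ≤ h s := le_of_lt (lt_trans one_pos hH)
  have ht2 : t s ^ 2 = h s - 1 := by
    rw [ht]; exact Real.sq_sqrt (by linarith)
  have hg2 : g s ^ 2 = ((2 * s ^ 2 - 4) / (12 * s)) ^ 2 * h s := by
    rw [hg]; rw [mul_pow, Real.sq_sqrt hH0]
  have hs0 : s ≠ 0 := ne_of_gt hs
  have hsq : s ^ 2 + 1 ≠ 0 := by positivity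
  have hval : h s = 2 * C * s ^ 4 / (s ^ 2 + 1) := by rw [hh]
  simp only [div_pow, ht2, hg2, hval]
  field_simp
  ring
end
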